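/- arXiv:1410.5497 — 3 statements merged into one kernel-verified Lean document; each statement's English description precedes it below -/
import Mathlib

section
/- Let λ be a partition of k and let j ≥ 0. The map sending a partition μ of j+k to the partition 1·μ of j+k+1 (obtained by adjoining one additional part equal to 1) restricts to an injection from col_p(1^j λ) to col_p(1^{j+1} λ), and this injection is a bijection whenever p ≤ (j+k)/2. -/
/-- `ElemCollapse μ ν` : `ν` is an elementary collapse of `μ`. -/
def ElemCollapse (μ ν : Multiset ℕ) : Prop :=
  ∃ (a b : ℕ) (rest : Multiset ℕ), μ = a ::ₘ b ::ₘ rest ∧ ν = (a + b) ::ₘ rest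

/-- `CollapseLE ν μ` : `ν ≤ μ`, i.e. `ν` is obtained from `μ` by a sequence of
elementary collapses. -/
def CollapseLE (ν μ : Multiset ℕ) : Prop :=
  Relation.ReflTransGen ElemCollapse μ ν

/-- `colSet μ m p` : the set `col_p(μ)` of partitions `λ'` of `m` with exactly
`m - p` parts which are *not* collapses of `μ`. -/
def colSet (μ : Multiset ℕ) (m p : ℕ) : Set (Multiset ℕ) :=
  {l | (∀ x ∈ l, 0 < x) ∧ l.sum = m ∧ Multiset.card l = m - p ∧ ¬ CollapseLE l μ}

lemma elemCollapse_add {μ ν : Multiset ℕ} (σ : Multiset ℕ) (h : ElemCollapse μ ν) :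
    ElemCollapse (μ + σ) (ν + σ) := by
  obtain ⟨a, b, rest, h1, h2⟩ := h
  exact ⟨a, b, rest + σ, by simp [h1], by simp [h2]⟩

lemma collapseLE_add {ν μ : Multiset ℕ} (σ : Multiset ℕ) (h : CollapseLE ν μ) :
    CollapseLE (ν + σ) (μ + σ) := by
  induction h with
  | refl => exact Relation.ReflTransGen.refl
  | tail _ h ih => exact ih.tail (elemCollapse_add σ h)

lemma collapseLE_sum_cons (B : Multiset ℕ) : ∀ a : ℕ, CollapseLE {a + B.sum} (a ::ₘ B) := by
  induction B using Multiset.induction with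
  | empty =>
    intro a
    have : ({a + (0:Multiset ℕ).sum} : Multiset ℕ) = a ::ₘ 0 := by simp
    rw [this]
    exact Relation.ReflTransGen.refl
  | cons b B ih =>
    intro a
    have step : ElemCollapse (a ::ₘ b ::ₘ B) ((a + b) ::ₘ B) := ⟨a, b, B, rfl, rfl⟩
    have := ih (a + b)
    refine Relation.ReflTransGen.head step ?_
    have h : (a + b) + B.sum = a + (b ::ₘ B).sum := by simp; ring
    rw [h] at this
    exact this

lemma collapseLE_sum_singleton {B : Multiset ℕ} (h : B ≠ 0) : CollapseLE {B.sum} B := by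
  obtain ⟨a, ha⟩ := Multiset.exists_mem_of_ne_zero h
  obtain ⟨B', rfl⟩ := Multiset.exists_cons_of_mem ha
  simpa using collapseLE_sum_cons B' a

lemma grouping_collapse (P : Multiset (Multiset ℕ)) (h : ∀ B ∈ P, B ≠ 0) :
    CollapseLE (P.map Multiset.sum) P.sum := by
  induction P using Multiset.induction with
  | empty =>
    simp only [Multiset.map_zero, Multiset.sum_zero]
    exact Relation.ReflTransGen.refl
  | cons B P ih =>
    have hB : B ≠ 0 := h B (Multiset.mem_cons_self _ _)
    have ihP := ih (fun C hC => h C (Multiset.mem_cons_of_mem hC))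
    have step1 : CollapseLE ({B.sum} + P.sum) (B + P.sum) :=
      collapseLE_add _ (collapseLE_sum_singleton hB)
    have step2 : CollapseLE ({B.sum} + P.map Multiset.sum) ({B.sum} + P.sum) := by
      rw [add_comm {B.sum} (P.map Multiset.sum), add_comm {B.sum} P.sum]
      exact collapseLE_add _ ihP
    have := Relation.ReflTransGen.trans (step1 : Relation.ReflTransGen _ _ _) step2
    simpa [CollapseLE, Multiset.singleton_add] using this

lemma exists_grouping {ν μ : Multiset ℕ} (h : CollapseLE ν μ) :
    ∃ P : Multiset (Multiset ℕ), (∀ B ∈ P, B ≠ 0) ∧ P.sum = μ ∧ P.map Multiset.sum = ν := by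
  induction h with
  | refl =>
    refine ⟨μ.map (fun a => {a}), ?_, by simp, by simp [Multiset.map_map]⟩
    intro B hB
    simp only [Multiset.mem_map] at hB
    obtain ⟨a, _, rfl⟩ := hB
    simp
  | tail _ helem ih =>
    obtain ⟨P, hne, hsum, hmap⟩ := ih
    obtain ⟨a, b, rest, hc, hν⟩ := helem
    rw [hc] at hmap
    obtain ⟨A, hA, hAsum, hmap2⟩ := (Multiset.map_eq_cons _ _ _ _).mpr hmap
    obtain ⟨B, hB, hBsum, hmap3⟩ := (Multiset.map_eq_cons _ _ _ _).mpr hmap2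
    refine ⟨(A + B) ::ₘ (P.erase A).erase B, ?_, ?_, ?_⟩
    · intro C hC
      rcases Multiset.mem_cons.mp hC with rfl | hC
      · intro hAB
        apply hne A hA
        have hle : A ≤ 0 := hAB ▸ Multiset.le_add_right A B
        exact Multiset.le_zero.mp hle
      · exact hne C (Multiset.mem_of_mem_erase (Multiset.mem_of_mem_erase hC))
    · have hP : P = A ::ₘ B ::ₘ (P.erase A).erase B := by
        rw [Multiset.cons_erase hB, Multiset.cons_erase hA]
      rw [← hsum, hP]
      simp [add_assoc]
    · rw [hν]
      simp [hAsum, hBsum, hmap3]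


lemma collapse_cons_one {μ μ0 : Multiset ℕ} (hpos : ∀ x ∈ μ0, 0 < x)
    (h : CollapseLE (1 ::ₘ μ) (1 ::ₘ μ0)) : CollapseLE μ μ0 := by
  obtain ⟨P, hne, hsum, hmap⟩ := exists_grouping h
  obtain ⟨B, hB, hBsum, hrest⟩ := (Multiset.map_eq_cons _ _ _ _).mpr hmap
  have hBle : B ≤ P.sum := Multiset.single_le_sum (fun x _ => zero_le (a := x)) B hB
  rw [hsum] at hBle
  have hBpos : ∀ x ∈ B, 1 ≤ x := by
    intro x hx
    have hxm : x ∈ (1 : ℕ) ::ₘ μ0 := Multiset.mem_of_le hBle hx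
    rcases Multiset.mem_cons.mp hxm with rfl | h2
    · exact le_refl 1
    · exact hpos x h2
  have hcard : Multiset.card B ≤ 1 := by
    have := Multiset.card_nsmul_le_sum hBpos
    simpa [hBsum] using this
  have hBne : B ≠ 0 := hne B hB
  have hcard1 : Multiset.card B = 1 := by
    have : 0 < Multiset.card B := Multiset.card_pos.mpr hBne
    omega
  obtain ⟨a, rfl⟩ := Multiset.card_eq_one.mp hcard1
  have ha1 : a = 1 := by simpa using hBsum
  subst ha1
  have hPdecomp : P = {1} ::ₘ P.erase {1} := (Multiset.cons_erase hB).symm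
  have hsum' : (P.erase {1}).sum = μ0 := by
    have : ({1} ::ₘ P.erase {1}).sum = (1 : ℕ) ::ₘ μ0 := by rw [← hPdecomp, hsum]
    simp only [Multiset.sum_cons, Multiset.singleton_add] at this
    exact (Multiset.cons_inj_right 1).mp this
  have := grouping_collapse (P.erase {1}) (fun C hC => hne C (Multiset.mem_of_mem_erase hC))
  rwa [hsum', hrest] at this

lemma collapseLE_cons_one {μ μ0 : Multiset ℕ} (h : CollapseLE μ μ0) :
    CollapseLE ((1 : ℕ) ::ₘ μ) ((1 : ℕ) ::ₘ μ0) := by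
  have h2 := collapseLE_add {1} h
  rw [add_comm μ {1}, add_comm μ0 {1}, Multiset.singleton_add, Multiset.singleton_add] at h2
  exact h2

/-- For a partition `λ` of `k` and `j ≥ 0`, adjoining one extra part equal to `1`
gives an injection `col_p(1^j λ) → col_p(1^{j+1} λ)`, which is a bijection whenever
`p ≤ (j+k)/2`. -/
theorem colSet_add_one_injective_bijective (k j p : ℕ) (lam : Multiset ℕ)
    (hpos : ∀ x ∈ lam, 0 < x) (hsum : lam.sum = k) :
    Set.InjOn (fun μ : Multiset ℕ => (1 : ℕ) ::ₘ μ)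
      (colSet (Multiset.replicate j 1 + lam) (j + k) p) ∧
    (fun μ : Multiset ℕ => (1 : ℕ) ::ₘ μ) ''
        colSet (Multiset.replicate j 1 + lam) (j + k) p ⊆
      colSet (Multiset.replicate (j + 1) 1 + lam) (j + k + 1) p ∧
    (2 * p ≤ j + k →
      (fun μ : Multiset ℕ => (1 : ℕ) ::ₘ μ) ''
          colSet (Multiset.replicate j 1 + lam) (j + k) p =
        colSet (Multiset.replicate (j + 1) 1 + lam) (j + k + 1) p) := by
  set μ0 : Multiset ℕ := Multiset.replicate j 1 + lam with hμ0
  have hμ0pos : ∀ x ∈ μ0, 0 < x := by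
    intro x hx
    rcases Multiset.mem_add.mp hx with h1 | h2
    · rw [Multiset.eq_of_mem_replicate h1]; norm_num
    · exact hpos x h2
  have hμ0sum : μ0.sum = j + k := by simp [hμ0, Multiset.sum_replicate, hsum]
  have hsucc : Multiset.replicate (j + 1) 1 + lam = (1 : ℕ) ::ₘ μ0 := by
    rw [hμ0, Multiset.replicate_succ, Multiset.cons_add]
  -- in the source, p < j + k
  have hmem : ∀ μ ∈ colSet μ0 (j + k) p, p < j + k := by
    intro μ hμ
    obtain ⟨hp, hs, hc, hn⟩ := hμ
    by_contra hcon
    push_neg at hcon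
    have hc0 : Multiset.card μ = 0 := by omega
    have hμz : μ = 0 := Multiset.card_eq_zero.mp hc0
    have hjk : j + k = 0 := by rw [hμz] at hs; simpa using hs.symm
    have hμ0z : μ0 = 0 := by
      refine Multiset.eq_zero_of_forall_notMem (fun x hx => ?_)
      have hle : x ≤ μ0.sum := Multiset.single_le_sum (fun y _ => Nat.zero_le y) x hx
      have := hμ0pos x hx
      omega
    rw [hμz, hμ0z] at hn
    exact hn Relation.ReflTransGen.refl
  have hsubset : (fun μ : Multiset ℕ => (1 : ℕ) ::ₘ μ) '' colSet μ0 (j + k) p ⊆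
      colSet ((1 : ℕ) ::ₘ μ0) (j + k + 1) p := by
    rintro _ ⟨μ, hμ, rfl⟩
    have hplt := hmem μ hμ
    obtain ⟨hp, hs, hc, hn⟩ := hμ
    refine ⟨?_, ?_, ?_, ?_⟩
    · intro x hx
      rcases Multiset.mem_cons.mp hx with rfl | h2
      · norm_num
      · exact hp x h2
    · simp only [Multiset.sum_cons, hs]
      omega
    · simp [hc]; omega
    · intro hcol
      exact hn (collapse_cons_one hμ0pos hcol)
  refine ⟨?_, by rwa [hsucc], ?_⟩
  · intro x _ y _ hxy
    simpa using hxy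
  · intro h2p
    rw [hsucc]
    refine Set.Subset.antisymm hsubset ?_
    rintro ν ⟨hp, hs, hc, hn⟩
    have h1mem : (1 : ℕ) ∈ ν := by
      by_contra h1
      have h2le : ∀ x ∈ ν, 2 ≤ x := by
        intro x hx
        have h0 := hp x hx
        have hx1 : x ≠ 1 := fun e => h1 (e ▸ hx)
        omega
      have hb : Multiset.card ν * 2 ≤ ν.sum := by
        simpa [smul_eq_mul, mul_comm] using Multiset.card_nsmul_le_sum h2le
      rw [hs, hc] at hb
      omega
    obtain ⟨μ, rfl⟩ := Multiset.exists_cons_of_mem h1mem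
    refine ⟨μ, ⟨?_, ?_, ?_, ?_⟩, rfl⟩
    · exact fun x hx => hp x (Multiset.mem_cons_of_mem hx)
    · have : (1 : ℕ) + μ.sum = j + k + 1 := by simpa using hs
      omega
    · have : Multiset.card μ + 1 = j + k + 1 - p := by simpa using hc
      omega
    · intro hcol
      exact hn (collapseLE_cons_one hcol)
end

section
/- Let λ be a partition of k, let i ≤ j, and let λ' be a partition of j+k. If λ' is not a collapse of 1^j λ, then the partition obtained from λ' by deleting any j−i parts each equal to 1 is not a collapse of 1^i λ. (This guarantees the particle-deletion map del_{i,j} on ordered symmetric complements is well defined.) -/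
lemma ElemCollapse.cons {μ ν : Multiset ℕ} (c : ℕ) (h : ElemCollapse μ ν) :
    ElemCollapse (c ::ₘ μ) (c ::ₘ ν) := by
  obtain ⟨a, b, rest, h1, h2⟩ := h
  exact ⟨a, b, c ::ₘ rest, by subst h1; simp [Multiset.cons_swap], by
    subst h2; simp [Multiset.cons_swap]⟩

lemma CollapseLE.cons {μ ν : Multiset ℕ} (c : ℕ) (h : CollapseLE ν μ) :
    CollapseLE (c ::ₘ ν) (c ::ₘ μ) := by
  induction h with
  | refl => exact Relation.ReflTransGen.refl
  | tail _ h2 ih => exact ih.tail (h2.cons c)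

lemma CollapseLE.add_left {μ ν : Multiset ℕ} (s : Multiset ℕ) (h : CollapseLE ν μ) :
    CollapseLE (s + ν) (s + μ) := by
  induction s using Multiset.induction with
  | empty => simpa
  | cons a s ih => simpa [Multiset.cons_add] using ih.cons a

/-- If `λ` is a partition of `k`, `i ≤ j`, and `λ'` is a partition of `j + k` which
is not a collapse of `1^j λ` and contains at least `j - i` parts equal to `1`, then
deleting `j - i` parts equal to `1` from `λ'` yields a partition which is not a
collapse of `1^i λ`. -/
theorem not_collapse_of_delete_ones (k i j : ℕ) (hij : i ≤ j)
    (lam lam' : Multiset ℕ)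
    (hpos : ∀ x ∈ lam, 0 < x) (hsum : lam.sum = k)
    (hpos' : ∀ x ∈ lam', 0 < x) (hsum' : lam'.sum = j + k)
    (hones : j - i ≤ lam'.count 1)
    (h : ¬ CollapseLE lam' (Multiset.replicate j 1 + lam)) :
    ¬ CollapseLE (lam' - Multiset.replicate (j - i) 1)
        (Multiset.replicate i 1 + lam) := by
  intro hc
  apply h
  have hle : Multiset.replicate (j - i) 1 ≤ lam' :=
    Multiset.le_count_iff_replicate_le.mp hones
  have h1 : Multiset.replicate (j - i) 1 + (lam' - Multiset.replicate (j - i) 1) = lam' :=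
    by rw [add_comm]; exact tsub_add_cancel_of_le hle
  have h2 : Multiset.replicate (j - i) 1 + (Multiset.replicate i 1 + lam)
      = Multiset.replicate j 1 + lam := by
    rw [← add_assoc, ← Multiset.replicate_add, Nat.sub_add_cancel hij]
  have := hc.add_left (Multiset.replicate (j - i) 1)
  rwa [h1, h2] at this
end

section
/- The map sending a monic complex polynomial of degree k to the multiset of its roots induces a homeomorphism between ℂ^k (the space of coefficient tuples, i.e., monic degree-k polynomials) and the k-th symmetric power Sym_k(ℂ) = ℂ^k/𝔖_k with the quotient topology. -/
open Polynomial

namespace SymPowProof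

/-- The coefficient map `ℂ^k → ℂ^k` sending a root tuple to the lower coefficients of
the corresponding monic polynomial. -/
noncomputable def phi (k : ℕ) (r : Fin k → ℂ) : Fin k → ℂ :=
  fun j => (∏ i : Fin k, (X - C (r i))).coeff (j : ℕ)

variable {k : ℕ}

lemma monic_P (r : Fin k → ℂ) : (∏ i : Fin k, (X - C (r i))).Monic :=
  monic_prod_of_monic _ _ fun _ _ => monic_X_sub_C _

lemma natDegree_P (r : Fin k → ℂ) : (∏ i : Fin k, (X - C (r i))).natDegree = k := by
  rw [natDegree_prod_of_monic _ _ fun _ _ => monic_X_sub_C _]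
  simp

lemma roots_P (r : Fin k → ℂ) :
    (∏ i : Fin k, (X - C (r i))).roots = Finset.univ.val.map r := by
  have : (∏ i : Fin k, (X - C (r i)))
      = ((Finset.univ.val.map r).map fun a => X - C a).prod := by
    rw [Multiset.map_map]; rfl
  rw [this, roots_multiset_prod_X_sub_C]

lemma exists_perm_of_map_eq {α : Type*} {r s : Fin k → α}
    (h : Finset.univ.val.map r = Finset.univ.val.map s) :
    ∃ σ : Equiv.Perm (Fin k), r ∘ σ = s := by
  classical
  have key : ∀ (f : Fin k → α) (a : α), Fintype.card {i // f i = a}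
      = Multiset.card (Multiset.filter (fun b => a = f b) Finset.univ.val) := by
    intro f a
    rw [Fintype.card_subtype]
    have : (Finset.univ.filter fun i => f i = a).val
        = Multiset.filter (fun b => a = f b) Finset.univ.val := by
      rw [Finset.filter_val]
      exact Multiset.filter_congr (fun x _ => eq_comm)
    rw [Finset.card, this]
  have hcard : ∀ a : α, Fintype.card {i // s i = a} = Fintype.card {i // r i = a} := by
    intro a
    have hc := congrArg (Multiset.count a) h
    rw [Multiset.count_map, Multiset.count_map] at hc
    rw [key, key, hc]
  let e : ∀ a, {i // s i = a} ≃ {i // r i = a} := fun a => Fintype.equivOfCardEq (hcard a)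
  refine ⟨(Equiv.sigmaFiberEquiv s).symm.trans
    ((Equiv.sigmaCongrRight e).trans (Equiv.sigmaFiberEquiv r)), ?_⟩
  funext i
  exact (e (s i) ⟨i, rfl⟩).2

lemma phi_eq_of_perm {r s : Fin k → ℂ} (σ : Equiv.Perm (Fin k)) (hσ : r ∘ σ = s) :
    phi k r = phi k s := by
  unfold phi
  subst hσ
  rw [← Equiv.prod_comp σ (fun i => X - C (r i))]
  rfl

lemma phi_injective_up_to_perm {r s : Fin k → ℂ} (h : phi k r = phi k s) :
    ∃ σ : Equiv.Perm (Fin k), r ∘ σ = s := by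
  have hP : (∏ i : Fin k, (X - C (r i))) = (∏ i : Fin k, (X - C (s i))) := by
    ext n
    rcases lt_trichotomy n k with hn | hn | hn
    · exact congrFun h ⟨n, hn⟩
    · subst hn
      have h1 := (monic_P r).coeff_natDegree
      rw [natDegree_P r] at h1
      have h2 := (monic_P s).coeff_natDegree
      rw [natDegree_P s] at h2
      rw [h1, h2]
    · rw [coeff_eq_zero_of_natDegree_lt (by rw [natDegree_P]; exact hn),
        coeff_eq_zero_of_natDegree_lt (by rw [natDegree_P]; exact hn)]
  apply exists_perm_of_map_eq
  rw [← roots_P, ← roots_P, hP]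

lemma phi_surjective : Function.Surjective (phi k) := by
  intro c
  set q : ℂ[X] := ∑ j : Fin k, C (c j) * X ^ (j : ℕ) with hq
  have hqdeg : q.degree < (k : ℕ) := by
    apply lt_of_le_of_lt (degree_sum_le _ _)
    rw [Finset.sup_lt_iff (by exact_mod_cast WithBot.bot_lt_coe k)]
    intro j _
    exact lt_of_le_of_lt (degree_C_mul_X_pow_le _ _) (by exact_mod_cast j.2)
  set p : ℂ[X] := X ^ k + q with hp
  have hmonic : p.Monic := monic_X_pow_add hqdeg
  have hpdeg : p.natDegree = k := by
    have : p.degree = (k : ℕ) := by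
      rw [hp, degree_add_eq_left_of_degree_lt (by rwa [degree_X_pow]), degree_X_pow]
    exact natDegree_eq_of_degree_eq_some this
  have hcard : Multiset.card p.roots = k := by
    rw [← hpdeg]
    exact (splits_iff_card_roots).mp (IsAlgClosed.splits p)
  obtain ⟨l, hl⟩ : ∃ l : List ℂ, p.roots = ↑l := ⟨p.roots.toList, (Multiset.coe_toList _).symm⟩
  have hlen : l.length = k := by rw [hl] at hcard; simpa using hcard
  set r : Fin k → ℂ := fun i => l.get (Fin.cast hlen.symm i) with hr
  have hofn : List.ofFn r = l := by
    apply List.ext_get (by simp [hlen])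
    intro n h1 h2
    simp [hr]
  have hmap : Finset.univ.val.map r = p.roots := by
    rw [hl, ← hofn]
    simp [Finset.univ, Fintype.elems, List.ofFn_eq_map]
  have hP : (∏ i : Fin k, (X - C (r i))) = p := by
    have h2 : (∏ i : Fin k, (X - C (r i)))
        = ((Finset.univ.val.map r).map fun a => X - C a).prod := by
      rw [Multiset.map_map]; rfl
    rw [h2, hmap]
    exact prod_multiset_X_sub_C_of_monic_of_roots_card_eq hmonic (by rw [hcard, hpdeg])
  refine ⟨r, ?_⟩
  funext j
  show (∏ i : Fin k, (X - C (r i))).coeff (j : ℕ) = c j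
  rw [hP, hp, coeff_add, coeff_X_pow, if_neg (by exact_mod_cast j.2.ne), zero_add, hq,
    finset_sum_coeff]
  simp only [coeff_C_mul, coeff_X_pow]
  rw [Finset.sum_eq_single j]
  · simp
  · intro b _ hb
    rw [if_neg (fun hh => hb (by exact Fin.ext hh.symm ▸ rfl)), mul_zero]
  · simp

lemma continuous_coeff_prod (t : Finset (Fin k)) (j : ℕ) :
    Continuous fun r : Fin k → ℂ => (∏ i ∈ t, (X - C (r i))).coeff j := by
  induction t using Finset.induction_on generalizing j with
  | empty => simpa using continuous_const
  | @insert a t ha ih =>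
    cases j with
    | zero =>
      have : (fun r : Fin k → ℂ => (∏ i ∈ insert a t, (X - C (r i))).coeff 0)
          = fun r => -(r a * (∏ i ∈ t, (X - C (r i))).coeff 0) := by
        funext r
        rw [Finset.prod_insert ha, sub_mul, coeff_sub, coeff_C_mul, mul_coeff_zero,
          coeff_X_zero, zero_mul, zero_sub]
      rw [this]
      exact ((continuous_apply a).mul (ih 0)).neg
    | succ n =>
      have : (fun r : Fin k → ℂ => (∏ i ∈ insert a t, (X - C (r i))).coeff (n + 1))
          = fun r => (∏ i ∈ t, (X - C (r i))).coeff n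
              - r a * (∏ i ∈ t, (X - C (r i))).coeff (n + 1) := by
        funext r
        rw [Finset.prod_insert ha, sub_mul, coeff_sub, coeff_C_mul, coeff_X_mul]
      rw [this]
      exact (ih n).sub ((continuous_apply a).mul (ih (n + 1)))

lemma continuous_phi : Continuous (phi k) :=
  continuous_pi fun j => continuous_coeff_prod Finset.univ (j : ℕ)

lemma root_bound (r : Fin k → ℂ) (j : Fin k) :
    ‖r j‖ ≤ 1 + ∑ i : Fin k, ‖phi k r i‖ := by
  have hsum_nonneg : (0:ℝ) ≤ ∑ i : Fin k, ‖phi k r i‖ :=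
    Finset.sum_nonneg fun _ _ => norm_nonneg _
  set P : ℂ[X] := ∏ i : Fin k, (X - C (r i)) with hPdef
  have hmonic : P.Monic := monic_P r
  have hdeg : P.natDegree = k := natDegree_P r
  set x : ℂ := r j with hx
  have heval : P.eval x = 0 := by
    rw [hPdef, eval_prod]
    exact Finset.prod_eq_zero (Finset.mem_univ j) (by simp [hx])
  have hsum : x ^ k + ∑ i ∈ Finset.range k, P.coeff i * x ^ i = 0 := by
    have := eval_eq_sum_range' (p := P) (n := k + 1) (by rw [hdeg]; exact Nat.lt_succ_self k) x
    rw [heval] at this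
    rw [Finset.sum_range_succ] at this
    have hck : P.coeff k = 1 := by
      rw [← hdeg]; exact hmonic.coeff_natDegree
    rw [hck, one_mul] at this
    linear_combination -this
  have hxk : x ^ k = -∑ i ∈ Finset.range k, P.coeff i * x ^ i := by
    linear_combination hsum
  have hk : 0 < k := j.pos
  by_cases hx1 : ‖x‖ ≤ 1
  · linarith
  push_neg at hx1
  have hxpos : (0:ℝ) < ‖x‖ := lt_trans one_pos hx1
  have hbound : ‖x‖ ^ k ≤ (∑ i ∈ Finset.range k, ‖P.coeff i‖) * ‖x‖ ^ (k - 1) := by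
    calc ‖x‖ ^ k = ‖x ^ k‖ := (norm_pow x k).symm
    _ = ‖∑ i ∈ Finset.range k, P.coeff i * x ^ i‖ := by rw [hxk, norm_neg]
    _ ≤ ∑ i ∈ Finset.range k, ‖P.coeff i * x ^ i‖ := norm_sum_le _ _
    _ ≤ ∑ i ∈ Finset.range k, ‖P.coeff i‖ * ‖x‖ ^ (k - 1) := by
        apply Finset.sum_le_sum
        intro i hi
        rw [norm_mul, norm_pow]
        apply mul_le_mul_of_nonneg_left _ (norm_nonneg _)
        exact pow_le_pow_right₀ hx1.le (Nat.le_sub_one_of_lt (Finset.mem_range.mp hi))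
    _ = (∑ i ∈ Finset.range k, ‖P.coeff i‖) * ‖x‖ ^ (k - 1) := by rw [← Finset.sum_mul]
  have hxk' : ‖x‖ ^ k = ‖x‖ * ‖x‖ ^ (k - 1) := by
    rw [← pow_succ']
    congr 1
    omega
  have hpow_pos : (0:ℝ) < ‖x‖ ^ (k - 1) := pow_pos hxpos _
  have h2 : ‖x‖ ≤ ∑ i ∈ Finset.range k, ‖P.coeff i‖ := by
    rw [hxk'] at hbound
    exact le_of_mul_le_mul_right hbound hpow_pos
  have h3 : ∑ i ∈ Finset.range k, ‖P.coeff i‖ = ∑ i : Fin k, ‖phi k r i‖ := by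
    rw [← Fin.sum_univ_eq_sum_range (fun i => ‖P.coeff i‖)]
    rfl
  rw [h3] at h2
  linarith

lemma isProperMap_phi : IsProperMap (phi k) := by
  rw [isProperMap_iff_isCompact_preimage]
  refine ⟨continuous_phi, fun K hK => ?_⟩
  obtain ⟨M, hM⟩ := hK.isBounded.subset_closedBall 0
  set M' : ℝ := max M 0 with hM'
  have hM'' : K ⊆ Metric.closedBall 0 M' :=
    hM.trans (Metric.closedBall_subset_closedBall (le_max_left _ _))
  apply Metric.isCompact_of_isClosed_isBounded (hK.isClosed.preimage continuous_phi)
  apply Bornology.IsBounded.subset (Metric.isBounded_closedBall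
    (x := (0 : Fin k → ℂ)) (r := 1 + k * M'))
  intro r hr
  have hnorm : ‖phi k r‖ ≤ M' := by
    have := hM'' hr
    rwa [Metric.mem_closedBall, dist_zero_right] at this
  rw [Metric.mem_closedBall, dist_zero_right]
  have hM'nonneg : (0:ℝ) ≤ M' := le_max_right _ _
  apply pi_norm_le_iff_of_nonneg (by positivity) |>.mpr
  intro j
  calc ‖r j‖ ≤ 1 + ∑ i : Fin k, ‖phi k r i‖ := root_bound r j
  _ ≤ 1 + ∑ _i : Fin k, M' := by
      gcongr with i
      exact (norm_le_pi_norm (phi k r) i).trans hnorm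
  _ = 1 + k * M' := by simp [Finset.sum_const, mul_comm]

end SymPowProof

/-- The setoid on `Fin k → ℂ` identifying tuples of roots up to permutation; the
quotient is the symmetric power `Sym_k(ℂ) = ℂ^k / 𝔖_k` with the quotient
topology. -/
def permSetoid (k : ℕ) : Setoid (Fin k → ℂ) where
  r r₁ r₂ := ∃ σ : Equiv.Perm (Fin k), r₁ ∘ σ = r₂
  iseqv := by
    constructor
    · intro a
      exact ⟨Equiv.refl _, rfl⟩
    · rintro a b ⟨σ, rfl⟩
      exact ⟨σ.symm, by funext i; simp⟩
    · rintro a b c ⟨σ, rfl⟩ ⟨τ, rfl⟩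
      exact ⟨τ.trans σ, by funext i; simp⟩

/-- The map sending a monic complex polynomial of degree `k` to the multiset of
its roots induces a homeomorphism between the symmetric power
`Sym_k(ℂ) = ℂ^k/𝔖_k` (with the quotient topology) and `ℂ^k` (the space of
coefficient tuples of monic degree-`k` polynomials): explicitly, the
homeomorphism sends the class of a tuple of roots `r` to the tuple of the first
`k` coefficients of `∏ᵢ (X - C (r i))`. -/
theorem symmetric_power_complex_homeomorph_coefficients (k : ℕ) :
    ∃ h : Quotient (permSetoid k) ≃ₜ (Fin k → ℂ),
      ∀ r : Fin k → ℂ,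
        h (Quotient.mk (permSetoid k) r) =
          fun j : Fin k =>
            (∏ i : Fin k, (Polynomial.X - Polynomial.C (r i))).coeff (j : ℕ) := by
  classical
  set f : Quotient (permSetoid k) → (Fin k → ℂ) :=
    Quotient.lift (SymPowProof.phi k)
      (fun _ _ hab => by obtain ⟨σ, hσ⟩ := hab; exact SymPowProof.phi_eq_of_perm σ hσ) with hf
  have hinj : Function.Injective f := by
    intro a b
    induction a using Quotient.ind
    induction b using Quotient.ind
    intro h
    exact Quotient.sound (SymPowProof.phi_injective_up_to_perm h)
  have hsurj : Function.Surjective f := by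
    intro c
    obtain ⟨r, hr⟩ := SymPowProof.phi_surjective c
    exact ⟨Quotient.mk _ r, hr⟩
  let e : Quotient (permSetoid k) ≃ (Fin k → ℂ) := Equiv.ofBijective f ⟨hinj, hsurj⟩
  have hcont : Continuous f := SymPowProof.continuous_phi.quotient_lift _
  have himg : ∀ s : Set (Quotient (permSetoid k)),
      f '' s = SymPowProof.phi k '' ((Quotient.mk (permSetoid k)) ⁻¹' s) := by
    intro s
    ext y
    constructor
    · rintro ⟨q, hq, rfl⟩
      obtain ⟨r, rfl⟩ := Quotient.exists_rep q
      exact ⟨r, hq, rfl⟩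
    · rintro ⟨r, hr, rfl⟩
      exact ⟨Quotient.mk _ r, hr, rfl⟩
  have hconts : Continuous e.symm := by
    rw [continuous_iff_isClosed]
    intro s hs
    have h1 : e.symm ⁻¹' s = f '' s := by
      rw [← Equiv.image_eq_preimage_symm]
      rfl
    rw [h1, himg]
    apply SymPowProof.isProperMap_phi.isClosedMap
    exact hs.preimage continuous_quot_mk
  refine ⟨⟨e, hcont, hconts⟩, fun r => rfl⟩
end
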